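/- The monitor synthesised from a server specification is rejection sound: for all servers p and q, if rej(q, ⟦p⟧) then p ⋢ q, where ⟦·⟧ is the synthesis defined by ⟦nil⟧ = end, ⟦α.p⟧ = ¬α.no + α.⟦p⟧, ⟦p+q⟧ = ⟦p⟧ × ⟦q⟧, ⟦p⊕q⟧ = ⟦p⟧ × ⟦q⟧. -/

import Mathlib

/-- Actions: names and co-names. -/
inductive Act : Type where
  | pos : Nat → Act
  | neg : Nat → Act
deriving DecidableEq

/-- Complementation (dual) of actions. -/
def Act.dual : Act → Act
  | .pos n => .neg n
  | .neg n => .pos n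

/-- Server contracts. -/
inductive Srv : Type where
  | nil : Srv
  | pre : Act → Srv → Srv
  | ext : Srv → Srv → Srv
  | int : Srv → Srv → Srv
deriving DecidableEq

/-- Client contracts (additionally with success `ok`). -/
inductive Cli : Type where
  | nil : Cli
  | ok : Cli
  | pre : Act → Cli → Cli
  | ext : Cli → Cli → Cli
  | int : Cli → Cli → Cli
deriving DecidableEq

/-- Server LTS; label `none` is the silent action τ. -/
inductive SStep : Srv → Option Act → Srv → Prop where
  | pre : ∀ (a : Act) (p : Srv), SStep (.pre a p) (some a) p
  | extL : ∀ {p ℓ p'} (q : Srv), SStep p ℓ p' → SStep (.ext p q) ℓ p'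
  | extR : ∀ {q ℓ q'} (p : Srv), SStep q ℓ q' → SStep (.ext p q) ℓ q'
  | intL : ∀ (p q : Srv), SStep (.int p q) none p
  | intR : ∀ (p q : Srv), SStep (.int p q) none q

/-- Client LTS; label `none` is τ.  `ok` and `nil` have no transitions. -/
inductive CStep : Cli → Option Act → Cli → Prop where
  | pre : ∀ (a : Act) (r : Cli), CStep (.pre a r) (some a) r
  | extL : ∀ {r ℓ r'} (s : Cli), CStep r ℓ r' → CStep (.ext r s) ℓ r'
  | extR : ∀ {s ℓ s'} (r : Cli), CStep s ℓ s' → CStep (.ext r s) ℓ s'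
  | intL : ∀ (r s : Cli), CStep (.int r s) none r
  | intR : ∀ (r s : Cli), CStep (.int r s) none s

/-- System τ-transitions for a client-server system `r ∥ p`. -/
inductive SysStep : Cli × Srv → Cli × Srv → Prop where
  | srv : ∀ {p p'} (r : Cli), SStep p none p' → SysStep (r, p) (r, p')
  | cli : ∀ {r r'} (p : Srv), CStep r none r' → SysStep (r, p) (r', p)
  | syn : ∀ {r r' p p' a}, CStep r (some (Act.dual a)) r' → SStep p (some a) p' →
      SysStep (r, p) (r', p')

/-- `Sat p r`: every maximal computation from `r ∥ p` is successful. -/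
def Sat (p : Srv) (r : Cli) : Prop :=
  ∀ s q, Relation.ReflTransGen SysStep (r, p) (s, q) →
    (¬ ∃ x, SysStep (s, q) x) → s = Cli.ok

/-- The server (subcontract) preorder. -/
def SrvPre (p q : Srv) : Prop := ∀ r, Sat p r → Sat q r

/-- Monitor verdicts: acceptance, rejection, inconclusive. -/
inductive Verd : Type where
  | yes : Verd
  | no : Verd
  | stp : Verd
deriving DecidableEq

/-- Monitors. -/
inductive Mon : Type where
  | verd : Verd → Mon
  | act : Act → Mon → Mon
  | nact : Act → Mon → Mon
  | choice : Mon → Mon → Mon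
  | conj : Mon → Mon → Mon
deriving DecidableEq

/-- Monitor LTS (on visible actions only); verdicts persist. -/
inductive MStep : Mon → Act → Mon → Prop where
  | verd : ∀ (v : Verd) (a : Act), MStep (.verd v) a (.verd v)
  | act : ∀ (a : Act) (m : Mon), MStep (.act a m) a m
  | nact : ∀ {b a : Act} (m : Mon), b ≠ a → MStep (.nact a m) b m
  | chL : ∀ {m a m'} (n : Mon), MStep m a m' → MStep (.choice m n) a m'
  | chR : ∀ {n a n'} (m : Mon), MStep n a n' → MStep (.choice m n) a n'
  | conj : ∀ {m a m' n n'}, MStep m a m' → MStep n a n' →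
      MStep (.conj m n) a (.conj m' n')

/-- Instrumentation of a monitor over a server: `m ◁ p`. -/
inductive IStep : Mon × Srv → Option Act → Mon × Srv → Prop where
  | mon : ∀ {m p a m' p'}, SStep p (some a) p' → MStep m a m' →
      IStep (m, p) (some a) (m', p')
  | ter : ∀ {m p a p'}, SStep p (some a) p' → (¬ ∃ m', MStep m a m') →
      IStep (m, p) (some a) (.verd .stp, p')
  | asy : ∀ {p p'} (m : Mon), SStep p none p' → IStep (m, p) none (m, p')

/-- Reachability along monitored computations. -/
def IReach : Mon × Srv → Mon × Srv → Prop :=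
  Relation.ReflTransGen (fun x y => ∃ ℓ, IStep x ℓ y)

/-- Rejecting monitor states: conjunctions `no × ⋯ × no` (incl. the single `no`). -/
inductive IsRej : Mon → Prop where
  | no : IsRej (.verd .no)
  | conj : ∀ {m n}, IsRej m → IsRej n → IsRej (.conj m n)

/-- `Rej p m`: some monitored computation from `m ◁ p` reaches a rejecting state. -/
def Rej (p : Srv) (m : Mon) : Prop :=
  ∃ m' p', IReach (m, p) (m', p') ∧ IsRej m'

/-- Monitor synthesis from a server specification. -/
def synth : Srv → Mon
  | .nil => .verd .stp
  | .pre a p => .choice (.nact a (.verd .no)) (.act a (synth p))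
  | .ext p q => .conj (synth p) (synth q)
  | .int p q => .conj (synth p) (synth q)

/-- Traces (finite sequences of visible actions) of a server. -/
inductive STrace : Srv → List Act → Prop where
  | nil : ∀ (p : Srv), STrace p []
  | tau : ∀ {p p' t}, SStep p none p' → STrace p' t → STrace p t
  | act : ∀ {p a p' t}, SStep p (some a) p' → STrace p' t → STrace p (a :: t)

/-- Traces of a monitored system. -/
inductive ITrace : Mon × Srv → List Act → Prop where
  | nil : ∀ (x : Mon × Srv), ITrace x []
  | tau : ∀ {x y t}, IStep x none y → ITrace y t → ITrace x t
  | act : ∀ {x a y t}, IStep x (some a) y → ITrace y t → ITrace x (a :: t)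

/-- Weak visible transition: τ-steps followed by a visible action. -/
def WAct (p : Srv) (a : Act) (p' : Srv) : Prop :=
  ∃ p₀, Relation.ReflTransGen (fun x y => SStep x none y) p p₀ ∧ SStep p₀ (some a) p'

/-!
A rejecting state of `⟦p⟧ ◁ q` can only be reached along a trace `t` that `q` performs while
`⟦p⟧` follows `t` to a rejecting verdict, and by induction on `p` the latter forces `p` to be
unable to perform `t`. The client `ā₁.(ā₂.(⋯) + ok ⊕ ok) + ok ⊕ ok` for `t = a₁ a₂ ⋯` may
succeed at every point except after completing `t`, so it is satisfied by `p` but not by `q`.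
-/

theorem Act.dual_dual (a : Act) : a.dual.dual = a := by
  cases a <;> rfl

theorem Act.dual_injective : Function.Injective Act.dual :=
  Function.Involutive.injective Act.dual_dual

theorem SStep.sizeOf_lt {p : Srv} {ℓ : Option Act} {p' : Srv} (h : SStep p ℓ p') :
    sizeOf p' < sizeOf p := by
  induction h <;> simp <;> omega

theorem Srv.exists_tau_stuck (p : Srv) :
    ∃ p', Relation.ReflTransGen (fun x y => SStep x none y) p p' ∧ ∀ p'', ¬ SStep p' none p'' := by
  by_cases h : ∃ p₁, SStep p none p₁
  · obtain ⟨p₁, h₁⟩ := h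
    obtain ⟨p', hp', hstuck⟩ := Srv.exists_tau_stuck p₁
    exact ⟨p', .head h₁ hp', hstuck⟩
  · exact ⟨p, .refl, fun p'' hp'' => h ⟨p'', hp''⟩⟩
termination_by sizeOf p
decreasing_by exact h₁.sizeOf_lt

namespace STrace

theorem pre_inv {a b : Act} {p : Srv} {t : List Act} (h : STrace (.pre a p) (b :: t)) :
    b = a ∧ STrace p t := by
  rcases h with _ | ⟨hτ, _⟩ | ⟨hs, ht⟩
  · cases hτ
  · cases hs
    exact ⟨rfl, ht⟩

theorem ext_inv {p q : Srv} {t : List Act} (h : STrace (.ext p q) t) :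
    STrace p t ∨ STrace q t := by
  rcases h with _ | ⟨hτ, ht⟩ | ⟨hs, ht⟩
  · exact .inl (.nil p)
  · rcases hτ with _ | ⟨_, hτ⟩ | ⟨_, hτ⟩
    · exact .inl (.tau hτ ht)
    · exact .inr (.tau hτ ht)
  · rcases hs with _ | ⟨_, hs⟩ | ⟨_, hs⟩
    · exact .inl (.act hs ht)
    · exact .inr (.act hs ht)

theorem int_inv {p q : Srv} {t : List Act} (h : STrace (.int p q) t) :
    STrace p t ∨ STrace q t := by
  rcases h with _ | ⟨hτ, ht⟩ | ⟨hs, _⟩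
  · exact .inl (.nil p)
  · rcases hτ with _ | _ | _ | _ | _
    · exact .inl ht
    · exact .inr ht
  · cases hs

end STrace

inductive MSteps : Mon → List Act → Mon → Prop where
  | nil (m : Mon) : MSteps m [] m
  | cons {m a m₁ t m'} : MStep m a m₁ → MSteps m₁ t m' → MSteps m (a :: t) m'

namespace MSteps

theorem verd_eq {v : Verd} {t : List Act} {m' : Mon} (h : MSteps (.verd v) t m') :
    m' = .verd v := by
  generalize hm : Mon.verd v = m at h
  induction h with
  | nil => rfl
  | cons hs _ ih =>
    subst hm
    cases hs
    exact ih rfl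

theorem conj_inv {m n : Mon} {t : List Act} {k : Mon} (h : MSteps (.conj m n) t k) :
    ∃ m' n', k = .conj m' n' ∧ MSteps m t m' ∧ MSteps n t n' := by
  generalize hk : Mon.conj m n = k₀ at h
  induction h generalizing m n with
  | nil => exact ⟨m, n, hk.symm, .nil m, .nil n⟩
  | cons hs _ ih =>
    subst hk
    rcases hs with _ | _ | _ | _ | _ | ⟨hm, hn⟩
    obtain ⟨m', n', rfl, hm', hn'⟩ := ih rfl
    exact ⟨m', n', rfl, .cons hm hm', .cons hn hn'⟩

end MSteps

theorem not_strace_of_synth_msteps {p : Srv} {t : List Act} {m' : Mon}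
    (h : MSteps (synth p) t m') (hrej : IsRej m') : ¬ STrace p t := by
  induction p generalizing t m' with
  | nil =>
    rw [MSteps.verd_eq (v := .stp) h] at hrej
    cases hrej
  | pre a p ih =>
    rcases h with _ | ⟨hs, hrest⟩
    · cases hrej
    intro htr
    obtain ⟨rfl, htr'⟩ := htr.pre_inv
    rcases hs with _ | _ | _ | ⟨_, hs⟩ | ⟨_, hs⟩
    · rcases hs with _ | _ | ⟨_, hne⟩
      exact hne rfl
    · cases hs
      exact ih hrest hrej htr'
  | ext p q ihp ihq =>
    obtain ⟨m₁, m₂, rfl, hm₁, hm₂⟩ := h.conj_inv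
    rcases hrej with _ | ⟨hrej₁, hrej₂⟩
    exact fun htr => htr.ext_inv.elim (ihp hm₁ hrej₁) (ihq hm₂ hrej₂)
  | int p q ihp ihq =>
    obtain ⟨m₁, m₂, rfl, hm₁, hm₂⟩ := h.conj_inv
    rcases hrej with _ | ⟨hrej₁, hrej₂⟩
    exact fun htr => htr.int_inv.elim (ihp hm₁ hrej₁) (ihq hm₂ hrej₂)

theorem IStep.verd_stp {p : Srv} {ℓ : Option Act} {y : Mon × Srv}
    (h : IStep (.verd .stp, p) ℓ y) : y.1 = .verd .stp := by
  rcases h with ⟨_, hm⟩ | _ | _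
  · cases hm; rfl
  all_goals rfl

theorem IReach.verd_stp {x y : Mon × Srv} (h : IReach x y) (hx : x.1 = .verd .stp) :
    y.1 = .verd .stp := by
  induction h with
  | refl => exact hx
  | @tail b _ _ hs ih =>
    obtain ⟨ℓ, hs⟩ := hs
    obtain ⟨_, _⟩ := b
    obtain rfl : _ = Mon.verd .stp := ih
    exact hs.verd_stp

theorem IReach.exists_msteps_strace {x y : Mon × Srv} (h : IReach x y) (hrej : IsRej y.1) :
    ∃ t, MSteps x.1 t y.1 ∧ STrace x.2 t := by
  induction h using Relation.ReflTransGen.head_induction_on with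
  | refl => exact ⟨[], .nil _, .nil _⟩
  | head hs hrest ih =>
    obtain ⟨ℓ, hs⟩ := hs
    rcases hs with ⟨hs, hm⟩ | ⟨_, _⟩ | ⟨_, hs⟩
    · obtain ⟨t, hm', ht⟩ := ih
      exact ⟨_, .cons hm hm', .act hs ht⟩
    · rw [IReach.verd_stp hrest rfl] at hrej
      cases hrej
    · obtain ⟨t, hm', ht⟩ := ih
      exact ⟨t, hm', .tau hs ht⟩

theorem CStep.pre_inv {c : Act} {r : Cli} {ℓ : Option Act} {r' : Cli}
    (h : CStep (.pre c r) ℓ r') : ℓ = some c ∧ r' = r := by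
  cases h
  exact ⟨rfl, rfl⟩

/-- `ok ⊕ ok` rather than `ok`: success must be reachable by a τ-move, and `ok` has none. -/
def traceClient : List Act → Cli
  | [] => .nil
  | a :: t => .ext (.pre a.dual (traceClient t)) (.int .ok .ok)

theorem traceClient_sysStep {t : List Act} {p : Srv} {c : Cli} {p' : Srv}
    (h : SysStep (traceClient t, p) (c, p')) (hp : ¬ STrace p t) :
    c = .ok ∨ ∃ s, c = traceClient s ∧ ¬ STrace p' s := by
  cases t with
  | nil => exact absurd (.nil p) hp
  | cons a t =>
    rcases h with ⟨_, hs⟩ | ⟨_, hc⟩ | ⟨hc, hs⟩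
    · exact .inr ⟨a :: t, rfl, fun ht => hp (.tau hs ht)⟩
    · rcases hc with _ | ⟨_, hc⟩ | ⟨_, hc⟩
      · cases hc
      · cases hc <;> exact .inl rfl
    · rcases hc with _ | ⟨_, hc⟩ | ⟨_, hc⟩
      · obtain ⟨hℓ, rfl⟩ := hc.pre_inv
        obtain rfl := Act.dual_injective (Option.some.inj hℓ)
        exact .inr ⟨t, rfl, fun ht => hp (.act hs ht)⟩
      · cases hc

theorem traceClient_reach {t : List Act} {p : Srv} {c : Cli} {p' : Srv}
    (h : Relation.ReflTransGen SysStep (traceClient t, p) (c, p')) (hp : ¬ STrace p t) :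
    c = .ok ∨ ∃ s, c = traceClient s ∧ ¬ STrace p' s := by
  generalize hy : (c, p') = y at h
  induction h generalizing c p' with
  | refl => cases hy; exact .inr ⟨t, rfl, hp⟩
  | @tail b _ _ hs ih =>
    subst hy
    obtain ⟨c₀, p₀⟩ := b
    rcases ih rfl with rfl | ⟨s, rfl, hs₀⟩
    · rcases hs with _ | ⟨_, hc⟩ | ⟨hc, _⟩
      · exact .inl rfl
      · cases hc
      · cases hc
    · exact traceClient_sysStep hs hs₀

theorem sat_traceClient_of_not_strace {p : Srv} {t : List Act} (hp : ¬ STrace p t) :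
    Sat p (traceClient t) := by
  intro c p' hreach hstuck
  rcases traceClient_reach hreach hp with hok | ⟨s, rfl, hs⟩
  · exact hok
  cases s with
  | nil => exact absurd (.nil p') hs
  | cons a s => exact absurd ⟨(.ok, p'), .cli _ (.extR _ (.intL _ _))⟩ hstuck

theorem STrace.traceClient_reach {q : Srv} {t : List Act} (h : STrace q t) :
    ∃ q', Relation.ReflTransGen SysStep (traceClient t, q) (.nil, q') := by
  induction h with
  | nil q => exact ⟨q, .refl⟩
  | tau hs _ ih =>
    obtain ⟨q', hq'⟩ := ih
    exact ⟨q', .head (.srv _ hs) hq'⟩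
  | act hs _ ih =>
    obtain ⟨q', hq'⟩ := ih
    exact ⟨q', .head (.syn (.extL _ (.pre _ _)) hs) hq'⟩

theorem not_sat_traceClient_of_strace {q : Srv} {t : List Act} (h : STrace q t) :
    ¬ Sat q (traceClient t) := by
  obtain ⟨q', hq'⟩ := h.traceClient_reach
  obtain ⟨q'', hτ, hstuck⟩ := q'.exists_tau_stuck
  have hreach : Relation.ReflTransGen SysStep (traceClient t, q) (.nil, q'') :=
    hq'.trans (hτ.lift (fun r => (Cli.nil, r)) fun _ _ => .srv _)
  have hdeadlock : ¬ ∃ y, SysStep (.nil, q'') y := fun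
    | ⟨_, .srv _ hs⟩ => hstuck _ hs
  exact fun hsat => nomatch hsat .nil q'' hreach hdeadlock

theorem sat_traceClient_iff {p : Srv} {t : List Act} : Sat p (traceClient t) ↔ ¬ STrace p t :=
  ⟨fun hsat h => not_sat_traceClient_of_strace h hsat, sat_traceClient_of_not_strace⟩

/-- Synthesis soundness: whenever `rej(q, ⟦p⟧)` then `p ⋢ q`. -/
theorem synthesis_sound (p q : Srv) : Rej q (synth p) → ¬ SrvPre p q := by
  rintro ⟨m', q', hreach, hrej⟩ hpre
  obtain ⟨t, hm, hq⟩ := hreach.exists_msteps_strace hrej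
  have hp : Sat p (traceClient t) :=
    sat_traceClient_iff.2 (not_strace_of_synth_msteps hm hrej)
  exact sat_traceClient_iff.1 (hpre _ hp) hq
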